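/- arXiv:math/0312435 — 2 statements merged into one kernel-verified Lean document; each statement's English description precedes it below -/
import Mathlib

section
/- Let B be a quaternion algebra over a field F of characteristic not 2, and let μ, χ ∈ B be invertible pure quaternions with μχ = -χμ, with μ² = c·1 and χ² = d·1 for c, d ∈ F*. Then B is isomorphic as an F-algebra to the quaternion algebra ℍ[F, c, d] (with i ↦ μ, j ↦ χ). -/
/-- Auxiliary: if `x•1 + y•u = 0` where the unit `u` anticommutes with a unit `v`,
then `x = y = 0`. -/
lemma twisted_aux (F : Type*) [Field F] (hF : (2 : F) ≠ 0) (a b : F)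
    (u v : (QuaternionAlgebra F a 0 b)ˣ)
    (hanti : (u : QuaternionAlgebra F a 0 b) * v = -((v : QuaternionAlgebra F a 0 b) * u))
    (x y : F)
    (h : algebraMap F (QuaternionAlgebra F a 0 b) x + y • (u : QuaternionAlgebra F a 0 b) = 0) :
    x = 0 ∧ y = 0 := by
  set B := QuaternionAlgebra F a 0 b
  have h1 : (v : B) * (algebraMap F B x + y • (u : B)) = 0 := by rw [h, mul_zero]
  have h2 : (algebraMap F B x + y • (u : B)) * v = 0 := by rw [h, zero_mul]
  have h4 : (2 * y) • ((v : B) * u) = 0 := by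
    rw [mul_add, ← Algebra.commutes x ((v : B)), mul_smul_comm] at h1
    rw [add_mul, smul_mul_assoc, hanti, smul_neg, ← sub_eq_add_neg] at h2
    rw [two_mul, add_smul]
    calc y • ((v : B) * u) + y • ((v : B) * u)
        = (algebraMap F B x * v + y • ((v : B) * u)) -
          (algebraMap F B x * v - y • ((v : B) * u)) := by abel
      _ = 0 := by rw [h1, h2, sub_zero]
  have hy : y = 0 := by
    rcases smul_eq_zero.mp h4 with h' | h'
    · rcases mul_eq_zero.mp h' with h'' | h''
      · exact absurd h'' hF
      · exact h''
    · exact absurd h' (Units.ne_zero (v * u))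
  refine ⟨?_, hy⟩
  rw [hy, zero_smul, add_zero] at h
  exact (algebraMap F B).injective (h.trans (map_zero _).symm)

/-- If `μ, χ` are anticommuting invertible pure quaternions in a
quaternion algebra `B` over a field of characteristic ≠ 2 with `μ² = c·1` and
`χ² = d·1` (`c, d ∈ F*`), then `B ≃ ℍ[F, c, d]` as `F`-algebras, via `i ↦ μ`,
`j ↦ χ`. -/
theorem twisted_presentation (F : Type*) [Field F] (hF : (2 : F) ≠ 0) (a b c d : F)
    (hc : c ≠ 0) (hd : d ≠ 0)
    (μ χ : (QuaternionAlgebra F a 0 b)ˣ)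
    (hμ : (μ : QuaternionAlgebra F a 0 b) + star μ = 0)
    (hχ : (χ : QuaternionAlgebra F a 0 b) + star χ = 0)
    (hanti : (μ : QuaternionAlgebra F a 0 b) * χ = -((χ : QuaternionAlgebra F a 0 b) * μ))
    (hμ2 : (μ : QuaternionAlgebra F a 0 b) ^ 2 = algebraMap F (QuaternionAlgebra F a 0 b) c)
    (hχ2 : (χ : QuaternionAlgebra F a 0 b) ^ 2 = algebraMap F (QuaternionAlgebra F a 0 b) d) :
    ∃ e : QuaternionAlgebra F c 0 d ≃ₐ[F] QuaternionAlgebra F a 0 b,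
      e ⟨0, 1, 0, 0⟩ = (μ : QuaternionAlgebra F a 0 b) ∧
      e ⟨0, 0, 1, 0⟩ = (χ : QuaternionAlgebra F a 0 b) := by
  set B := QuaternionAlgebra F a 0 b
  have hanti' : (χ : B) * μ = -((μ : B) * χ) := by rw [hanti, neg_neg]
  -- the quaternionic basis
  let qb : QuaternionAlgebra.Basis B c 0 d :=
    { i := μ
      j := χ
      k := (μ : B) * χ
      i_mul_i := by rw [← sq, hμ2, Algebra.algebraMap_eq_smul_one, zero_smul, add_zero]
      j_mul_j := by rw [← sq, hχ2, Algebra.algebraMap_eq_smul_one]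
      i_mul_j := rfl
      j_mul_i := by rw [zero_smul, zero_sub]; exact hanti' }
  let f : QuaternionAlgebra F c 0 d →ₐ[F] B := qb.liftHom
  have hfi : f ⟨0, 1, 0, 0⟩ = (μ : B) := by
    show qb.lift _ = _
    simp [QuaternionAlgebra.Basis.lift, qb]
  have hfj : f ⟨0, 0, 1, 0⟩ = (χ : B) := by
    show qb.lift _ = _
    simp [QuaternionAlgebra.Basis.lift, qb]
  -- injectivity
  have hinj : Function.Injective f := by
    rw [injective_iff_map_eq_zero]
    intro q hq
    have hq' : algebraMap F B q.re + q.imI • (μ : B) +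
        (q.imJ • (χ : B) + q.imK • ((μ : B) * χ)) = 0 := by
      have : f q = algebraMap F B q.re + q.imI • (μ : B) + q.imJ • (χ : B) +
          q.imK • ((μ : B) * χ) := rfl
      rw [this] at hq
      rw [← add_assoc]
      exact hq
    set A : B := algebraMap F B q.re + q.imI • (μ : B) with hA
    set Bb : B := q.imJ • (χ : B) + q.imK • ((μ : B) * χ) with hBb
    have hcommA : (μ : B) * A = A * μ := by
      rw [hA, mul_add, add_mul, ← Algebra.commutes q.re ((μ : B)), mul_smul_comm,
        smul_mul_assoc]
    have hantiB : (μ : B) * Bb = -(Bb * μ) := by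
      simp only [hBb, mul_add, add_mul, mul_smul_comm, smul_mul_assoc, hanti', mul_assoc,
        mul_neg, neg_neg, smul_neg, neg_add]
      rw [mul_neg, smul_neg, neg_neg, neg_neg]
    have hAB : A - Bb = 0 := by
      have h1 : (μ : B) * (A + Bb) = 0 := by rw [hq', mul_zero]
      have h2 : (A - Bb) * μ = 0 := by
        rw [mul_add, hcommA, hantiB] at h1
        rw [sub_mul, ← h1]; abel
      have := congrArg (· * ((μ⁻¹ : Bˣ) : B)) h2
      simpa [mul_assoc] using this
    have hA0 : A = 0 := by
      have h2 : (2 : F) • A = 0 := by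
        rw [two_smul]
        calc A + A = (A + Bb) + (A - Bb) := by abel
          _ = 0 := by rw [hq', hAB, add_zero]
      rcases smul_eq_zero.mp h2 with h' | h'
      · exact absurd h' hF
      · exact h'
    have hB0 : Bb = 0 := by
      have := hq'
      rw [hA0, zero_add] at this
      exact this
    have hA0' : algebraMap F B q.re + q.imI • (μ : B) = 0 := by rw [← hA]; exact hA0
    have h1 := twisted_aux F hF a b μ χ hanti q.re q.imI hA0'
    have hB0' : algebraMap F B q.imJ + q.imK • (μ : B) = 0 := by
      have := congrArg (· * ((χ⁻¹ : Bˣ) : B)) hB0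
      simp only [hBb, add_mul, smul_mul_assoc, mul_assoc, Units.mul_inv, mul_one,
        zero_mul] at this
      rw [← this, Algebra.algebraMap_eq_smul_one]
    have h2 := twisted_aux F hF a b μ χ hanti q.imJ q.imK hB0'
    ext <;> simp [h1.1, h1.2, h2.1, h2.2]
  -- surjectivity via dimension count
  have hsurj : Function.Surjective f := by
    have := LinearMap.injective_iff_surjective_of_finrank_eq_finrank
      (V := QuaternionAlgebra F c 0 d) (V₂ := B) (f := f.toLinearMap)
      (by rw [QuaternionAlgebra.finrank_eq_four, QuaternionAlgebra.finrank_eq_four])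
    exact this.mp hinj
  exact ⟨AlgEquiv.ofBijective f ⟨hinj, hsurj⟩, hfi, hfj⟩
end

section
/- Let B be a quaternion algebra over a field F and let μ ∈ B be an invertible pure quaternion. The alternating form E_μ(β₁, β₂) = tr(μβ₁β̄₂) satisfies the adjunction formula E_μ(β·γ₁, γ₂) = E_μ(γ₁, ρ_μ(β)·γ₂) for all β, γ₁, γ₂ ∈ B, where ρ_μ(β) = μ⁻¹β̄μ. -/
/-- The reduced trace of a quaternion, `tr(x) = x + x̄` identified with an element
of `F` (so `tr(x) = 2·x.re`). -/
def quatTrace {F : Type*} [Field F] {a b : F} (x : QuaternionAlgebra F a 0 b) : F :=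
  2 * x.re

theorem quatTrace_mul_comm {F : Type*} [Field F] {a b : F}
    (x y : QuaternionAlgebra F a 0 b) : quatTrace (x * y) = quatTrace (y * x) := by
  simp only [quatTrace, QuaternionAlgebra.re_mul]
  ring

/-- For an invertible pure quaternion `μ`, the alternating form
`E_μ(β₁, β₂) = tr(μβ₁β̄₂)` satisfies the adjunction formula
`E_μ(β·γ₁, γ₂) = E_μ(γ₁, ρ_μ(β)·γ₂)` where `ρ_μ(β) = μ⁻¹β̄μ`. -/
theorem E_mu_adjunction (F : Type*) [Field F] (a b : F)
    (μ : (QuaternionAlgebra F a 0 b)ˣ)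
    (hμ : (μ : QuaternionAlgebra F a 0 b) + star μ = 0) :
    ∀ β γ₁ γ₂ : QuaternionAlgebra F a 0 b,
      quatTrace ((μ : QuaternionAlgebra F a 0 b) * (β * γ₁) * star γ₂)
        = quatTrace ((μ : QuaternionAlgebra F a 0 b) * γ₁ *
            star ((↑μ⁻¹ * star β * ↑μ : QuaternionAlgebra F a 0 b) * γ₂)) := by
  intro β γ₁ γ₂
  set m : QuaternionAlgebra F a 0 b := ↑μ with hm
  have hsm : star m = -m := (neg_eq_of_add_eq_zero_right hμ).symm
  have hinv : (↑μ⁻¹ : QuaternionAlgebra F a 0 b) * m = 1 := μ.inv_mul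
  have hinv' : m * (↑μ⁻¹ : QuaternionAlgebra F a 0 b) = 1 := μ.mul_inv
  have hsi : star (↑μ⁻¹ : QuaternionAlgebra F a 0 b) = -↑μ⁻¹ := by
    have h1 : star (↑μ⁻¹ : QuaternionAlgebra F a 0 b) * star m = 1 := by
      rw [← star_mul, hinv', star_one]
    calc star (↑μ⁻¹ : QuaternionAlgebra F a 0 b)
        = star (↑μ⁻¹ : QuaternionAlgebra F a 0 b) * (star m * (-↑μ⁻¹)) := by
          rw [hsm, neg_mul_neg, hinv', mul_one]
      _ = -↑μ⁻¹ := by rw [← mul_assoc, h1, one_mul]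
  rw [star_mul, star_mul, star_mul, hsm, hsi, star_star]
  show quatTrace (m * (β * γ₁) * star γ₂)
      = quatTrace (m * γ₁ * (star γ₂ * (-m * (β * -(↑μ⁻¹ : QuaternionAlgebra F a 0 b)))))
  have key : m * γ₁ * (star γ₂ * (-m * (β * -(↑μ⁻¹ : QuaternionAlgebra F a 0 b))))
      = (m * γ₁ * star γ₂ * m * β) * ↑μ⁻¹ := by noncomm_ring
  rw [key, quatTrace_mul_comm (m * γ₁ * star γ₂ * m * β) ↑μ⁻¹]
  have key3 : (↑μ⁻¹ : QuaternionAlgebra F a 0 b) * (m * γ₁ * star γ₂ * m * β)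
      = (↑μ⁻¹ * m) * ((γ₁ * star γ₂) * (m * β)) := by noncomm_ring
  rw [key3, hinv, one_mul, quatTrace_mul_comm (γ₁ * star γ₂) (m * β)]
  congr 1
  noncomm_ring
end
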